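/- arXiv:2402.07048 — 3 statements merged into one kernel-verified Lean document; each statement's English description precedes it below -/
import Mathlib

section
/- Let a, b, a', b' > 0 be real numbers with a' + b' = a + b. For λ > 0, define the Pólya density π_PO(λ; a, b) = Σ_{k=0}^∞ (-1)^k [Γ(a+b+k)/(Γ(a+b)·k!)] · (k + (a+b)/2) · (1/B(a,b)) · exp(−(k+a)(k+b)λ/2). Then for every λ > 0, π_PO(λ; a', b') = [B(a,b)/B(a',b')] · exp(λ(ab − a'b')/2) · π_PO(λ; a, b). -/
open Real

/-- The beta function `B(a,b) = Γ(a)Γ(b)/Γ(a+b)`. -/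
noncomputable def betaFn (a b : ℝ) : ℝ := Real.Gamma a * Real.Gamma b / Real.Gamma (a + b)

/-- The Pólya density with shape parameters `a, b`, as a pointwise series in `λ`. -/
noncomputable def polyaDensity (a b l : ℝ) : ℝ :=
  ∑' k : ℕ, (-1 : ℝ) ^ k * (Real.Gamma (a + b + k) / (Real.Gamma (a + b) * k.factorial)) *
    ((k : ℝ) + (a + b) / 2) * (1 / betaFn a b) * Real.exp (-((k : ℝ) + a) * ((k : ℝ) + b) * l / 2)

lemma betaFn_pos {a b : ℝ} (ha : 0 < a) (hb : 0 < b) : 0 < betaFn a b := by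
  unfold betaFn
  positivity

/-- `(k + a)(k + b) = k² + (a + b) k + ab` depends on `(a, b)` only through `a + b` and `ab`. -/
lemma exp_neg_mul_eq_of_add_eq {a b a' b' : ℝ} (hsum : a' + b' = a + b) (k l : ℝ) :
    Real.exp (-(k + a') * (k + b') * l / 2) =
      Real.exp (l * (a * b - a' * b') / 2) * Real.exp (-(k + a) * (k + b) * l / 2) := by
  rw [← Real.exp_add]
  congr 1
  linear_combination (-(l * k) / 2) * hsum

/- Only the Gaussian-type factor and the normalisation `1 / B` of each term depend on more than
`a + b`, so the identity holds term by term. -/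
theorem polyaDensity_identity_general (a b a' b' : ℝ) (ha : 0 < a) (hb : 0 < b)
    (hsum : a' + b' = a + b) :
    ∀ l : ℝ, 0 < l →
      polyaDensity a' b' l =
        (betaFn a b / betaFn a' b') * Real.exp (l * (a * b - a' * b') / 2) *
          polyaDensity a b l := by
  intro l _
  have hB : betaFn a b ≠ 0 := (betaFn_pos ha hb).ne'
  unfold polyaDensity
  rw [hsum, ← tsum_mul_left]
  refine tsum_congr fun k => ?_
  rw [exp_neg_mul_eq_of_add_eq hsum]
  field_simp

/-- Proposition 2.1: the Pólya density identity along parameter pairs with fixed sum. -/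
theorem polyaDensity_identity (a b a' b' : ℝ) (ha : 0 < a) (hb : 0 < b)
    (ha' : 0 < a') (hb' : 0 < b') (hsum : a' + b' = a + b) :
    ∀ l : ℝ, 0 < l →
      polyaDensity a' b' l =
        (betaFn a b / betaFn a' b') * Real.exp (l * (a * b - a' * b') / 2) *
          polyaDensity a b l :=
  polyaDensity_identity_general a b a' b' ha hb hsum
end

section
/- Let a, b > 0 with a ≠ b. Then the series Σ_{k=0}^∞ 1/((k+a)²(k+b)²) converges and equals (1/(a−b)²) · [ ψ'(a) + ψ'(b) − (2/(a−b)) (ψ(a) − ψ(b)) ]. Consequently the Pólya distribution with parameters (a,b), defined as the law of Σ_{k=0}^∞ 2ε_k/((k+a)(k+b)) for independent standard exponential random variables ε_k, has variance (4/(a−b)²) [ψ'(a) + ψ'(b) − (2/(a−b))(ψ(a) − ψ(b))]. -/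
open Real MeasureTheory ProbabilityTheory

/-- The digamma function `ψ = (log Γ)'` on `(0,∞)`. -/
noncomputable def digamma (x : ℝ) : ℝ := deriv (fun y => Real.log (Real.Gamma y)) x

/-- The trigamma function `ψ' = (log Γ)''` on `(0,∞)`. -/
noncomputable def trigamma (x : ℝ) : ℝ := deriv digamma x

open Filter Topology Finset
open scoped ENNReal

/-!
Differentiating the Bohr–Mollerup limit
`log Γ(x) = lim (x log n + log n! - ∑_{m ≤ n} log (x + m))` term by term (the derivatives
converge locally uniformly) gives `ψ(x) = -γ + ∑ₘ (1/(m+1) - 1/(m+x))` and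
`ψ'(x) = ∑ₘ 1/(m+x)²`. With `A = k + a`, `B = k + b` and `A - B = a - b`, the partial fraction
decomposition `1/(A²B²) = (1/(a-b)²) (1/A² + 1/B² - (2/(a-b)) (1/B - 1/A))` sums to the series
identity.

For the variance, `S = ∑ₖ cₖ εₖ` with `cₖ = 2/((k+a)(k+b))` is a series of independent
variables whose `L²` norms `cₖ ‖ε₀‖₂` are summable. Then `S - 𝔼 S = ∑ₖ cₖ (εₖ - 1)` almost surely,
Cauchy–Schwarz bounds `∑_{p,q} 𝔼 |Yₚ Y_q|` by `(∑ₖ ‖Yₖ‖₂)²` for the centred terms `Yₖ`, so the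
square may be expanded and integrated term by term, and independence kills the cross terms.
What is left is `∑ₖ cₖ² Var εₖ = ∑ₖ cₖ² = 4 ∑ₖ 1/((k+a)²(k+b)²)`.
-/

namespace Polya

lemma summable_one_div_add_sq (a : ℝ) : Summable fun n : ℕ => 1 / ((n : ℝ) + a) ^ 2 := by
  simpa only [rpow_two, sq_abs] using (Real.summable_one_div_nat_add_rpow a 2).2 one_lt_two

lemma summable_one_div_add_mul_add (a b : ℝ) :
    Summable fun n : ℕ => 1 / (((n : ℝ) + a) * ((n : ℝ) + b)) := by
  refine .of_norm_bounded ((summable_one_div_add_sq a).add (summable_one_div_add_sq b))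
    fun n => ?_
  have amgm := two_mul_le_add_sq |1 / ((n : ℝ) + a)| |1 / ((n : ℝ) + b)|
  rw [sq_abs, sq_abs, div_pow, div_pow, one_pow] at amgm
  rw [norm_eq_abs, ← one_div_mul_one_div, abs_mul]
  nlinarith [abs_nonneg (1 / ((n : ℝ) + a)), abs_nonneg (1 / ((n : ℝ) + b))]

noncomputable def digammaTerm (m : ℕ) (x : ℝ) : ℝ := ((m : ℝ) + 1)⁻¹ - ((m : ℝ) + x)⁻¹

lemma summable_digammaTerm {x : ℝ} (hx : 0 < x) : Summable (digammaTerm · x) := by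
  refine ((summable_one_div_add_mul_add 1 x).mul_left (x - 1)).congr fun m => ?_
  have : (m : ℝ) + x ≠ 0 := by positivity
  simp only [digammaTerm]
  field_simp
  ring

lemma monotoneOn_digammaTerm (m : ℕ) : MonotoneOn (digammaTerm m) (Set.Ioi 0) :=
  fun x hx y _ hxy => by
    have : (0 : ℝ) < m + x := add_pos_of_nonneg_of_pos m.cast_nonneg hx
    simp only [digammaTerm]
    gcongr

lemma tendstoUniformlyOn_sum_digammaTerm {l : ℝ} (hl : 0 < l) (u : ℝ) :
    TendstoUniformlyOn (fun n x => ∑ m ∈ range n, digammaTerm m x)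
      (fun x => ∑' m, digammaTerm m x) atTop (Set.Icc l u) := by
  rcases lt_or_ge u l with hul | hlu
  · simpa [Set.Icc_eq_empty_of_lt hul] using tendstoUniformlyOn_empty
  have hu : 0 < u := hl.trans_le hlu
  -- each term is monotone in `x`, hence bounded on `[l, u]` by its values at the endpoints
  refine tendstoUniformlyOn_tsum_nat
    ((summable_digammaTerm hl).abs.add (summable_digammaTerm hu).abs) fun m x hx => ?_
  have hx0 : (0 : ℝ) < x := hl.trans_le hx.1
  exact (abs_le_max_abs_abs (monotoneOn_digammaTerm m hl hx0 hx.1)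
    (monotoneOn_digammaTerm m hx0 hu hx.2)).trans
      (max_le_add_of_nonneg (abs_nonneg _) (abs_nonneg _))

lemma hasDerivAt_logGammaSeq {x : ℝ} (hx : 0 < x) (n : ℕ) :
    HasDerivAt (BohrMollerup.logGammaSeq · n)
      (log n - harmonic (n + 1) + ∑ m ∈ range (n + 1), digammaTerm m x) x := by
  have hlog : ∀ m ∈ range (n + 1),
      HasDerivAt (fun y => log (y + m)) (1 / ((m : ℝ) + x)) x := fun m _ => by
    simpa [one_div, add_comm] using ((hasDerivAt_id x).add_const (m : ℝ)).log (by positivity)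
  refine ((((hasDerivAt_id x).mul_const (log n)).add_const (log n.factorial)).fun_sub
    (HasDerivAt.fun_sum hlog)).congr_deriv ?_
  simp only [digammaTerm, sum_sub_distrib, harmonic]
  push_cast
  simp [one_div]

lemma tendsto_log_sub_harmonic_succ :
    Tendsto (fun n : ℕ => log n - harmonic (n + 1)) atTop (𝓝 (-eulerMascheroniConstant)) := by
  have := tendsto_harmonic_sub_log.neg.sub tendsto_one_div_add_atTop_nhds_zero_nat
  simp only [neg_sub, sub_zero] at this
  refine this.congr fun n => ?_
  rw [harmonic_succ]
  push_cast
  ring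

theorem hasDerivAt_log_Gamma {x : ℝ} (hx : 0 < x) :
    HasDerivAt (fun y => log (Gamma y))
      (-eulerMascheroniConstant + ∑' m, digammaTerm m x) x := by
  have hconv : TendstoUniformlyOn
      (fun (n : ℕ) y => log n - harmonic (n + 1) + ∑ m ∈ range (n + 1), digammaTerm m y)
      (fun y => -eulerMascheroniConstant + ∑' m, digammaTerm m y) atTop
      (Set.Icc (x / 2) (x + 1)) :=
    (tendsto_log_sub_harmonic_succ.tendstoUniformlyOn_const _).add
      fun v hv => (tendsto_add_atTop_nat 1).eventually
        (tendstoUniformlyOn_sum_digammaTerm (half_pos hx) _ v hv)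
  have hpos : ∀ y ∈ Set.Ioo (x / 2) (x + 1), 0 < y := fun y hy => (half_pos hx).trans hy.1
  exact hasDerivAt_of_tendstoUniformlyOn (f := fun n y => BohrMollerup.logGammaSeq y n)
    isOpen_Ioo (hconv.mono Set.Ioo_subset_Icc_self)
    (.of_forall fun n y hy => hasDerivAt_logGammaSeq (hpos y hy) n)
    (fun y hy => BohrMollerup.tendsto_log_gamma (hpos y hy)) ⟨by linarith, by linarith⟩

lemma digamma_eq_tsum {x : ℝ} (hx : 0 < x) :
    digamma x = -eulerMascheroniConstant + ∑' m, digammaTerm m x :=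
  (hasDerivAt_log_Gamma hx).deriv

lemma hasDerivAt_tsum_digammaTerm {x : ℝ} (hx : 0 < x) :
    HasDerivAt (fun y => ∑' m, digammaTerm m y) (∑' m : ℕ, 1 / ((m : ℝ) + x) ^ 2) x := by
  have hderiv : ∀ (m : ℕ) (y : ℝ), y ∈ Set.Ioi (x / 2) →
      HasDerivAt (digammaTerm m) (1 / ((m : ℝ) + y) ^ 2) y := fun m y hy => by
    have hmy : (m : ℝ) + y ≠ 0 :=
      (add_pos_of_nonneg_of_pos m.cast_nonneg ((half_pos hx).trans hy)).ne'
    exact ((((hasDerivAt_id' y).const_add (m : ℝ)).inv hmy).const_sub _).congr_deriv (by ring)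
  refine hasDerivAt_tsum_of_isPreconnected (summable_one_div_add_sq (x / 2)) isOpen_Ioi
    isPreconnected_Ioi hderiv (fun m y hy => ?_) (half_lt_self hx) (summable_digammaTerm hx)
    (half_lt_self hx)
  have : (0 : ℝ) < m + x / 2 := by positivity
  rw [norm_of_nonneg (by positivity)]
  gcongr
  exact hy.le

lemma hasSum_trigamma {x : ℝ} (hx : 0 < x) :
    HasSum (fun m : ℕ => 1 / ((m : ℝ) + x) ^ 2) (trigamma x) := by
  have : digamma =ᶠ[𝓝 x] fun y => -eulerMascheroniConstant + ∑' m, digammaTerm m y :=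
    eventually_of_mem (isOpen_Ioi.mem_nhds hx) fun y hy => digamma_eq_tsum hy
  rw [trigamma, this.deriv_eq, ((hasDerivAt_tsum_digammaTerm hx).const_add _).deriv]
  exact (summable_one_div_add_sq x).hasSum

lemma hasSum_digamma_sub {a b : ℝ} (ha : 0 < a) (hb : 0 < b) :
    HasSum (fun m : ℕ => 1 / ((m : ℝ) + b) - 1 / ((m : ℝ) + a)) (digamma a - digamma b) := by
  rw [digamma_eq_tsum ha, digamma_eq_tsum hb, add_sub_add_left_eq_sub]
  refine ((summable_digammaTerm ha).hasSum.sub (summable_digammaTerm hb).hasSum).congr_fun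
    fun m => ?_
  simp only [digammaTerm]
  ring

theorem hasSum_one_div_sq_mul_sq {a b : ℝ} (ha : 0 < a) (hb : 0 < b) (hab : a ≠ b) :
    HasSum (fun k : ℕ => 1 / (((k : ℝ) + a) ^ 2 * ((k : ℝ) + b) ^ 2))
      (1 / (a - b) ^ 2 * (trigamma a + trigamma b - 2 / (a - b) * (digamma a - digamma b))) := by
  refine ((((hasSum_trigamma ha).add (hasSum_trigamma hb)).sub
    ((hasSum_digamma_sub ha hb).mul_left (2 / (a - b)))).mul_left (1 / (a - b) ^ 2)).congr_fun
    fun k => ?_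
  have : (k : ℝ) + a ≠ 0 := by positivity
  have : (k : ℝ) + b ≠ 0 := by positivity
  have : a - b ≠ 0 := sub_ne_zero.2 hab
  field_simp
  ring

instance : IsProbabilityMeasure (expMeasure 1) := isProbabilityMeasure_expMeasure one_pos

lemma expMeasure_one_eq_withDensity :
    expMeasure 1 = volume.withDensity fun x => ((exponentialPDFReal 1 x).toNNReal : ℝ≥0∞) :=
  rfl

lemma toNNReal_exponentialPDFReal_one_smul (f : ℝ → ℝ) (x : ℝ) :
    (exponentialPDFReal 1 x).toNNReal • f x =
      (Set.Ici 0).indicator (fun x => exp (-x) * f x) x := by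
  by_cases hx : 0 ≤ x <;>
    simp [exponentialPDFReal, gammaPDFReal, hx, NNReal.smul_def, Set.indicator, (exp_pos _).le]

lemma integral_expMeasure_one (f : ℝ → ℝ) :
    ∫ x, f x ∂expMeasure 1 = ∫ x in Set.Ioi 0, exp (-x) * f x := by
  rw [expMeasure_one_eq_withDensity,
    integral_withDensity_eq_integral_smul (measurable_exponentialPDFReal 1).real_toNNReal,
    ← integral_Ici_eq_integral_Ioi, ← integral_indicator measurableSet_Ici]
  simp_rw [toNNReal_exponentialPDFReal_one_smul]

lemma integrable_expMeasure_one_iff {f : ℝ → ℝ} :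
    Integrable f (expMeasure 1) ↔ IntegrableOn (fun x => exp (-x) * f x) (Set.Ioi 0) := by
  rw [expMeasure_one_eq_withDensity,
    integrable_withDensity_iff_integrable_smul (measurable_exponentialPDFReal 1).real_toNNReal,
    ← integrableOn_Ici_iff_integrableOn_Ioi, ← integrable_indicator_iff measurableSet_Ici]
  simp_rw [toNNReal_exponentialPDFReal_one_smul]

lemma integrable_pow_expMeasure_one (n : ℕ) : Integrable (fun x => x ^ n) (expMeasure 1) := by
  refine integrable_expMeasure_one_iff.2 <|
    (GammaIntegral_convergent (Nat.cast_add_one_pos n)).congr_fun (fun x _ => ?_)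
      measurableSet_Ioi
  simp [← rpow_natCast]

lemma integral_pow_expMeasure_one (n : ℕ) : ∫ x, x ^ n ∂expMeasure 1 = n.factorial := by
  rw [integral_expMeasure_one, ← Gamma_nat_eq_factorial, Gamma_eq_integral (Nat.cast_add_one_pos n)]
  simp [← rpow_natCast]

lemma memLp_id_expMeasure_one : MemLp id 2 (expMeasure 1) :=
  (memLp_two_iff_integrable_sq aestronglyMeasurable_id).2 (integrable_pow_expMeasure_one 2)

lemma integral_id_expMeasure_one : ∫ x, x ∂expMeasure 1 = 1 := by
  simpa using integral_pow_expMeasure_one 1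

lemma variance_id_expMeasure_one : Var[id; expMeasure 1] = 1 := by
  rw [variance_eq_sub memLp_id_expMeasure_one]
  simp only [Pi.pow_apply, id, integral_pow_expMeasure_one 2, integral_id_expMeasure_one]
  norm_num

section Variance

variable {Ω : Type*} [MeasurableSpace Ω] {μ : Measure Ω}

lemma lintegral_enorm_mul_le_eLpNorm_mul_eLpNorm {f g : Ω → ℝ} (hf : AEStronglyMeasurable f μ)
    (hg : AEStronglyMeasurable g μ) :
    ∫⁻ ω, ‖f ω * g ω‖ₑ ∂μ ≤ eLpNorm f 2 μ * eLpNorm g 2 μ := by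
  rw [← eLpNorm_one_eq_lintegral_enorm]
  simpa using eLpNorm_le_eLpNorm_mul_eLpNorm'_of_norm (p := 2) (q := 2) (r := 1) hf hg (· * ·) 1
    (.of_forall fun ω => by simp [norm_mul])

lemma tsum_prod_eq_tsum_diag_of_eq_zero {f : ℕ × ℕ → ℝ}
    (hf : ∀ p q, p ≠ q → f (p, q) = 0) : ∑' p, f p = ∑' k, f (k, k) := by
  refine (Function.Injective.tsum_eq (g := fun k => (k, k)) (fun _ _ h => (Prod.ext_iff.1 h).1)
    fun p hp => ⟨p.1, ?_⟩).symm
  by_contra h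
  exact hp (hf p.1 p.2 fun h' => h (Prod.ext rfl h'))

theorem integral_tsum_sq_of_pairwise_indepFun {Y : ℕ → Ω → ℝ} (hY : ∀ k, MemLp (Y k) 2 μ)
    (hindep : Pairwise fun i j => IndepFun (Y i) (Y j) μ) (hmean : ∀ k, μ[Y k] = 0)
    (hsum : ∑' k, eLpNorm (Y k) 2 μ ≠ ∞) :
    ∫ ω, (∑' k, Y k ω) ^ 2 ∂μ = ∑' k, ∫ ω, Y k ω ^ 2 ∂μ := by
  have hae : ∀ᵐ ω ∂μ, Summable fun k => ‖Y k ω‖ :=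
    summable_norm_of_tsum_eLpNorm_ne_top one_le_two (fun k => (hY k).1) hsum
  have hpairs : ∑' p : ℕ × ℕ, ∫⁻ ω, ‖Y p.1 ω * Y p.2 ω‖ₑ ∂μ ≠ ∞ := by
    refine ne_top_of_le_ne_top ?_ (ENNReal.tsum_le_tsum fun p =>
      lintegral_enorm_mul_le_eLpNorm_mul_eLpNorm (hY p.1).1 (hY p.2).1)
    rw [ENNReal.tsum_prod (f := fun p q => eLpNorm (Y p) 2 μ * eLpNorm (Y q) 2 μ)]
    simp_rw [ENNReal.tsum_mul_left, ENNReal.tsum_mul_right]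
    exact ENNReal.mul_ne_top hsum hsum
  calc ∫ ω, (∑' k, Y k ω) ^ 2 ∂μ = ∫ ω, ∑' p : ℕ × ℕ, Y p.1 ω * Y p.2 ω ∂μ :=
        integral_congr_ae <| hae.mono fun ω h => by
          dsimp only
          rw [sq, tsum_mul_tsum_of_summable_norm h h]
    _ = ∑' p : ℕ × ℕ, ∫ ω, Y p.1 ω * Y p.2 ω ∂μ :=
        integral_tsum (fun p => (hY p.1).1.mul (hY p.2).1) hpairs
    _ = ∑' k, ∫ ω, Y k ω ^ 2 ∂μ := by
        refine (tsum_prod_eq_tsum_diag_of_eq_zero fun p q hpq => ?_).trans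
          (tsum_congr fun k => by simp only [sq])
        rw [(hindep hpq).integral_fun_mul_eq_mul_integral (hY p).1 (hY q).1, hmean p, zero_mul]

section Probability

variable [IsProbabilityMeasure μ] {f : Ω → ℝ}

lemma lintegral_enorm_le_eLpNorm_two (hf : AEStronglyMeasurable f μ) :
    ∫⁻ ω, ‖f ω‖ₑ ∂μ ≤ eLpNorm f 2 μ := by
  rw [← eLpNorm_one_eq_lintegral_enorm]
  exact eLpNorm_le_eLpNorm_of_exponent_le one_le_two hf

lemma enorm_integral_le_eLpNorm_two (hf : AEStronglyMeasurable f μ) : ‖μ[f]‖ₑ ≤ eLpNorm f 2 μ :=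
  (enorm_integral_le_lintegral_enorm _).trans (lintegral_enorm_le_eLpNorm_two hf)

lemma eLpNorm_sub_integral_le (hf : AEStronglyMeasurable f μ) :
    eLpNorm (fun ω => f ω - μ[f]) 2 μ ≤ 2 * eLpNorm f 2 μ := by
  have h := eLpNorm_sub_le (p := 2) hf (aestronglyMeasurable_const (b := μ[f])) (by norm_num)
  refine h.trans ?_
  rw [two_mul, eLpNorm_const _ two_ne_zero (IsProbabilityMeasure.ne_zero μ), measure_univ,
    ENNReal.one_rpow, mul_one]
  gcongr
  exact enorm_integral_le_eLpNorm_two hf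

theorem integral_sub_integral_tsum_sq_of_pairwise_indepFun
    {X : ℕ → Ω → ℝ} (hX : ∀ k, MemLp (X k) 2 μ)
    (hindep : Pairwise fun i j => IndepFun (X i) (X j) μ) (hsum : ∑' k, eLpNorm (X k) 2 μ ≠ ∞) :
    ∫ ω, (∑' k, X k ω - ∫ ω', ∑' k, X k ω' ∂μ) ^ 2 ∂μ = ∑' k, Var[X k; μ] := by
  have hm : Summable fun k => μ[X k] := .of_enorm <| ne_top_of_le_ne_top hsum <|
    ENNReal.tsum_le_tsum fun k => enorm_integral_le_eLpNorm_two (hX k).1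
  have hint : ∫ ω, ∑' k, X k ω ∂μ = ∑' k, μ[X k] := integral_tsum (fun k => (hX k).1) <|
    ne_top_of_le_ne_top hsum <|
      ENNReal.tsum_le_tsum fun k => lintegral_enorm_le_eLpNorm_two (hX k).1
  set Y : ℕ → Ω → ℝ := fun k ω => X k ω - μ[X k] with hY
  have hcenter : ∀ᵐ ω ∂μ, ∑' k, X k ω - ∑' k, μ[X k] = ∑' k, Y k ω :=
    (summable_norm_of_tsum_eLpNorm_ne_top one_le_two (fun k => (hX k).1) hsum).mono
      fun ω h => (h.of_norm.tsum_sub hm).symm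
  have hYLp : ∀ k, MemLp (Y k) 2 μ := fun k => (hX k).sub (memLp_const _)
  have hYindep : Pairwise fun i j => IndepFun (Y i) (Y j) μ := fun i j hij =>
    (hindep hij).comp (measurable_id.sub_const _) (measurable_id.sub_const _)
  have hYmean : ∀ k, μ[Y k] = 0 := fun k => by
    rw [hY, integral_sub ((hX k).integrable one_le_two) (integrable_const _), integral_const,
      probReal_univ, one_smul, sub_self]
  have hYsum : ∑' k, eLpNorm (Y k) 2 μ ≠ ∞ := by
    refine ne_top_of_le_ne_top ?_ <|
      ENNReal.tsum_le_tsum fun k => eLpNorm_sub_integral_le (hX k).1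
    rw [ENNReal.tsum_mul_left]
    exact ENNReal.mul_ne_top ENNReal.ofNat_ne_top hsum
  rw [hint, integral_congr_ae (hcenter.mono fun ω h => congrArg (· ^ 2) h),
    integral_tsum_sq_of_pairwise_indepFun hYLp hYindep hYmean hYsum]
  exact tsum_congr fun k => (variance_eq_integral (hX k).aemeasurable).symm

end Probability

end Variance

section Exponential

variable {Ω : Type*} [MeasurableSpace Ω] {μ : Measure Ω} {X : Ω → ℝ}

lemma memLp_two_of_map_eq_expMeasure_one (hX : AEMeasurable X μ)
    (hlaw : μ.map X = expMeasure 1) : MemLp X 2 μ :=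
  (memLp_map_measure_iff aestronglyMeasurable_id hX).1 (hlaw ▸ memLp_id_expMeasure_one)

lemma variance_of_map_eq_expMeasure_one (hX : AEMeasurable X μ)
    (hlaw : μ.map X = expMeasure 1) : Var[X; μ] = 1 := by
  rw [← variance_id_map hX, hlaw, variance_id_expMeasure_one]

lemma eLpNorm_of_map_eq_expMeasure_one (hX : AEMeasurable X μ)
    (hlaw : μ.map X = expMeasure 1) : eLpNorm X 2 μ = eLpNorm id 2 (expMeasure 1) := by
  rw [← hlaw, eLpNorm_map_measure aestronglyMeasurable_id hX, Function.id_comp]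

theorem integral_sub_integral_tsum_mul_sq_of_map_eq_expMeasure_one [IsProbabilityMeasure μ]
    {ε : ℕ → Ω → ℝ} (hmeas : ∀ k, AEMeasurable (ε k) μ)
    (hindep : Pairwise fun i j => IndepFun (ε i) (ε j) μ)
    (hlaw : ∀ k, μ.map (ε k) = expMeasure 1) {c : ℕ → ℝ} (hc : Summable c) :
    ∫ ω, (∑' k, c k * ε k ω - ∫ ω', ∑' k, c k * ε k ω' ∂μ) ^ 2 ∂μ = ∑' k, c k ^ 2 := by
  have hsum : ∑' k, eLpNorm (fun ω => c k * ε k ω) 2 μ ≠ ∞ := by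
    simp_rw [← smul_eq_mul, ← Pi.smul_def, eLpNorm_const_smul,
      eLpNorm_of_map_eq_expMeasure_one (hmeas _) (hlaw _), ENNReal.tsum_mul_right]
    exact ENNReal.mul_ne_top (tsum_enorm_ne_top_iff_summable_norm.2 hc.norm)
      memLp_id_expMeasure_one.eLpNorm_ne_top
  rw [integral_sub_integral_tsum_sq_of_pairwise_indepFun
    (fun k => (memLp_two_of_map_eq_expMeasure_one (hmeas k) (hlaw k)).const_mul (c k))
    (fun i j hij => (hindep hij).comp (measurable_const_mul _) (measurable_const_mul _)) hsum]
  exact tsum_congr fun k => by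
    rw [variance_const_mul, variance_of_map_eq_expMeasure_one (hmeas k) (hlaw k), mul_one]

end Exponential

end Polya

open Polya in
/-- The series `Σ_k 1/((k+a)²(k+b)²)` converges to
`(1/(a-b)²)[ψ'(a) + ψ'(b) - (2/(a-b))(ψ(a) - ψ(b))]`, and consequently the Pólya distribution
with parameters `(a,b)`, the law of `Σ_k 2ε_k/((k+a)(k+b))` for independent standard
exponentials `ε_k`, has variance `(4/(a-b)²)[ψ'(a) + ψ'(b) - (2/(a-b))(ψ(a) - ψ(b))]`
(the variance formula of Proposition S.1 in the paper). -/
theorem polya_variance {Ω : Type*} [MeasureSpace Ω] [IsProbabilityMeasure (ℙ : Measure Ω)]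
    (a b : ℝ) (ha : 0 < a) (hb : 0 < b) (hab : a ≠ b)
    (ε : ℕ → Ω → ℝ) (hmeas : ∀ k, Measurable (ε k))
    (hindep : iIndepFun ε ℙ)
    (hexp : ∀ k, Measure.map (ε k) ℙ = expMeasure 1) :
    HasSum (fun k : ℕ => 1 / ((((k : ℝ) + a) ^ 2) * (((k : ℝ) + b) ^ 2)))
        ((1 / (a - b) ^ 2) *
          (trigamma a + trigamma b - (2 / (a - b)) * (digamma a - digamma b))) ∧
      ∫ ω, (∑' k : ℕ, 2 * ε k ω / (((k : ℝ) + a) * ((k : ℝ) + b)) -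
            ∫ ω', (∑' k : ℕ, 2 * ε k ω' / (((k : ℝ) + a) * ((k : ℝ) + b))) ∂ℙ) ^ 2 ∂ℙ =
        (4 / (a - b) ^ 2) *
          (trigamma a + trigamma b - (2 / (a - b)) * (digamma a - digamma b)) := by
  have hseries := hasSum_one_div_sq_mul_sq ha hb hab
  refine ⟨hseries, ?_⟩
  have hc : Summable fun k : ℕ => 2 / (((k : ℝ) + a) * ((k : ℝ) + b)) := by
    simpa only [mul_one_div] using (summable_one_div_add_mul_add a b).mul_left 2
  simp_rw [mul_div_right_comm (2 : ℝ)]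
  rw [integral_sub_integral_tsum_mul_sq_of_map_eq_expMeasure_one (fun k => (hmeas k).aemeasurable)
    (fun i j hij => hindep.indepFun hij) hexp hc]
  calc ∑' k : ℕ, (2 / (((k : ℝ) + a) * ((k : ℝ) + b))) ^ 2
      = ∑' k : ℕ, 4 * (1 / (((k : ℝ) + a) ^ 2 * ((k : ℝ) + b) ^ 2)) :=
        tsum_congr fun k => by rw [div_pow, mul_pow]; ring
    _ = _ := by rw [tsum_mul_left, hseries.tsum_eq]; ring
end

section
/- Let a, b > 0 with a ≠ b. Then 0 < (ψ(a) − ψ(b))/(a − b) < (ψ'(a) + ψ'(b))/2. Equivalently, 0 < 2(ψ(a) − ψ(b)) / [(a − b)(ψ'(a) + ψ'(b))] < 1, so the correlation lower bound 1 − 4(ψ(a) − ψ(b))/[(a − b)(ψ'(a) + ψ'(b))] of the bivariate logistic-beta distribution lies in the interval (−1, 1). -/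
open Real

/-!
Weierstrass' product for `Γ`, obtained as the limit of the Bohr–Mollerup sequence `logGammaSeq`,
gives `log Γ(x) = -log x - γ x + ∑ₖ (x/(k+1) - log (1 + x/(k+1)))`. Differentiating termwise twice
yields `ψ(a) - ψ(b) = (a - b) ∑ₖ 1/((k+a)(k+b))` and `ψ'(c) = ∑ₖ 1/(k+c)²`, and the inequality
follows termwise from the strict AM–GM inequality `1/(uv) < (1/u² + 1/v²)/2` for `u ≠ v`.
-/
open Filter Topology

local notation "γ" => Real.eulerMascheroniConstant

lemma summable_one_div_natCast_add_sq {c : ℝ} (hc : 0 < c) :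
    Summable fun k : ℕ => 1 / ((k : ℝ) + c) ^ 2 :=
  ((summable_one_div_nat_add_rpow c 2).mpr one_lt_two).congr fun k => by
    rw [abs_of_pos (by positivity), rpow_two]

lemma sub_log_one_add_nonneg {u : ℝ} (hu : 0 ≤ u) : 0 ≤ u - log (1 + u) := by
  linarith [log_le_sub_one_of_pos (by linarith : 0 < 1 + u)]

lemma sub_log_one_add_le_sq {u : ℝ} (hu : 0 ≤ u) : u - log (1 + u) ≤ u ^ 2 := by
  have h₁ : 1 - (1 + u)⁻¹ ≤ log (1 + u) := one_sub_inv_le_log_of_pos (by linarith)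
  have h₂ : (1 + u)⁻¹ ≤ 1 - u + u ^ 2 := by
    rw [inv_le_iff_one_le_mul₀ (by linarith)]
    nlinarith
  linarith

noncomputable def logGammaTerm (x : ℝ) (k : ℕ) : ℝ := x / (k + 1) - log (1 + x / (k + 1))

noncomputable def digammaTerm (x : ℝ) (k : ℕ) : ℝ := 1 / (k + 1) - 1 / (k + 1 + x)

lemma logGammaTerm_nonneg {x : ℝ} (hx : 0 ≤ x) (k : ℕ) : 0 ≤ logGammaTerm x k :=
  sub_log_one_add_nonneg (by positivity)

lemma logGammaTerm_le {x : ℝ} (hx : 0 ≤ x) (k : ℕ) :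
    logGammaTerm x k ≤ x ^ 2 * (1 / ((k : ℝ) + 1) ^ 2) :=
  (sub_log_one_add_le_sq (by positivity)).trans_eq (by rw [div_pow, mul_one_div])

lemma summable_logGammaTerm {x : ℝ} (hx : 0 ≤ x) : Summable (logGammaTerm x) :=
  .of_nonneg_of_le (logGammaTerm_nonneg hx) (logGammaTerm_le hx)
    ((summable_one_div_natCast_add_sq one_pos).mul_left _)

lemma hasDerivAt_logGammaTerm {x : ℝ} (hx : 0 ≤ x) (k : ℕ) :
    HasDerivAt (logGammaTerm · k) (digammaTerm x k) x := by
  have hdiv : HasDerivAt (fun y : ℝ => y / (k + 1)) (1 / (k + 1)) x := by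
    simpa using (hasDerivAt_id x).div_const ((k : ℝ) + 1)
  refine (hdiv.sub ((hdiv.const_add 1).log (by positivity))).congr_deriv ?_
  rw [digammaTerm]
  field_simp

lemma digammaTerm_eq_div {x : ℝ} (hx : 0 ≤ x) (k : ℕ) :
    digammaTerm x k = x / ((k + 1) * (k + 1 + x)) := by
  rw [digammaTerm, div_sub_div _ _ (by positivity) (by positivity)]
  ring

lemma digammaTerm_nonneg {x : ℝ} (hx : 0 ≤ x) (k : ℕ) : 0 ≤ digammaTerm x k := by
  rw [digammaTerm_eq_div hx]
  positivity

lemma digammaTerm_le {x : ℝ} (hx : 0 ≤ x) (k : ℕ) :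
    digammaTerm x k ≤ x * (1 / ((k : ℝ) + 1) ^ 2) := by
  rw [digammaTerm_eq_div hx, mul_one_div, sq]
  exact div_le_div_of_nonneg_left hx (by positivity)
    (mul_le_mul_of_nonneg_left (by linarith) (by positivity))

lemma summable_digammaTerm {x : ℝ} (hx : 0 ≤ x) : Summable (digammaTerm x) :=
  .of_nonneg_of_le (digammaTerm_nonneg hx) (digammaTerm_le hx)
    ((summable_one_div_natCast_add_sq one_pos).mul_left _)

lemma hasDerivAt_digammaTerm {x : ℝ} (hx : 0 ≤ x) (k : ℕ) :
    HasDerivAt (digammaTerm · k) (1 / (k + 1 + x) ^ 2) x := by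
  have := (hasDerivAt_const x (1 : ℝ)).div ((hasDerivAt_id' x).const_add ((k : ℝ) + 1))
    (by positivity)
  refine (this.const_sub (1 / ((k : ℝ) + 1))).congr_deriv ?_
  ring

lemma logGammaSeq_eq_sum_logGammaTerm {x : ℝ} (hx : 0 < x) (n : ℕ) :
    BohrMollerup.logGammaSeq x n =
      -log x + ∑ k ∈ Finset.range n, logGammaTerm x k - x * (harmonic n - log n) := by
  have hfact : log n.factorial = ∑ k ∈ Finset.range n, log ((k : ℝ) + 1) := by
    rw [← Finset.prod_range_add_one_eq_factorial, Nat.cast_prod,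
      log_prod fun k _ => by positivity]
    push_cast
    rfl
  have hterm (k : ℕ) :
      logGammaTerm x k = x / (k + 1) - (log (x + (k + 1 : ℕ)) - log (k + 1)) := by
    rw [logGammaTerm, ← log_div (by positivity) (by positivity)]
    push_cast
    congr 2
    field_simp
    ring
  simp only [BohrMollerup.logGammaSeq, hfact, hterm, Finset.sum_range_succ' (fun m => log (x + m)),
    Finset.sum_sub_distrib, harmonic]
  push_cast
  simp only [add_zero, div_eq_mul_inv x, ← Finset.mul_sum]
  ring

theorem log_Gamma_eq_tsum {x : ℝ} (hx : 0 < x) :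
    log (Gamma x) = -log x - γ * x + ∑' k, logGammaTerm x k := by
  have hlim : Tendsto (BohrMollerup.logGammaSeq x) atTop
      (𝓝 (-log x + ∑' k, logGammaTerm x k - x * γ)) := by
    refine (((summable_logGammaTerm hx.le).hasSum.tendsto_sum_nat.const_add _).sub
      (tendsto_harmonic_sub_log.const_mul x)).congr fun n => ?_
    rw [logGammaSeq_eq_sum_logGammaTerm hx]
  rw [tendsto_nhds_unique (BohrMollerup.tendsto_log_gamma hx) hlim]
  ring

lemma hasDerivAt_tsum_logGammaTerm {x : ℝ} (hx : 0 < x) :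
    HasDerivAt (fun y => ∑' k, logGammaTerm y k) (∑' k, digammaTerm x k) x :=
  hasDerivAt_tsum_of_isPreconnected ((summable_one_div_natCast_add_sq one_pos).mul_left (x + 1))
    isOpen_Ioo (convex_Ioo 0 (x + 1)).isPreconnected
    (fun k y hy => hasDerivAt_logGammaTerm hy.1.le k)
    (fun k y hy => by
      rw [norm_of_nonneg (digammaTerm_nonneg hy.1.le k)]
      exact (digammaTerm_le hy.1.le k).trans (by gcongr; exact hy.2.le))
    ⟨hx, by linarith⟩ (summable_logGammaTerm hx.le) ⟨hx, by linarith⟩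

theorem digamma_eq_tsum {x : ℝ} (hx : 0 < x) :
    digamma x = -γ - 1 / x + ∑' k, digammaTerm x k := by
  have hseries := (((hasDerivAt_log hx.ne').neg.sub ((hasDerivAt_id' x).const_mul γ)).add
    (hasDerivAt_tsum_logGammaTerm hx)).congr_of_eventuallyEq
      (eventually_gt_nhds hx |>.mono fun y hy => log_Gamma_eq_tsum hy)
  rw [digamma, hseries.deriv]
  ring

lemma hasDerivAt_tsum_digammaTerm {x : ℝ} (hx : 0 < x) :
    HasDerivAt (fun y => ∑' k, digammaTerm y k) (∑' k : ℕ, 1 / (k + 1 + x) ^ 2) x :=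
  hasDerivAt_tsum_of_isPreconnected (summable_one_div_natCast_add_sq one_pos)
    isOpen_Ioi (convex_Ioi 0).isPreconnected
    (fun k y hy => hasDerivAt_digammaTerm (le_of_lt hy) k)
    (fun k y hy => by
      rw [norm_of_nonneg (by positivity)]
      exact one_div_le_one_div_of_le (by positivity)
        (pow_le_pow_left₀ (by positivity) (le_add_of_nonneg_right (le_of_lt hy)) 2))
    hx (summable_digammaTerm hx.le) hx

theorem trigamma_eq_tsum {x : ℝ} (hx : 0 < x) :
    trigamma x = ∑' k : ℕ, 1 / (k + x) ^ 2 := by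
  have hseries := (((hasDerivAt_inv hx.ne').const_sub (-γ)).add
    (hasDerivAt_tsum_digammaTerm hx)).congr_of_eventuallyEq (f₁ := digamma)
      (eventually_gt_nhds hx |>.mono fun y hy => by rw [digamma_eq_tsum hy, one_div]; rfl)
  rw [trigamma, hseries.deriv, (summable_one_div_natCast_add_sq hx).tsum_eq_zero_add]
  push_cast
  rw [zero_add, neg_neg, one_div]

lemma one_div_mul_le_avg (u v : ℝ) : 1 / (u * v) ≤ (1 / u ^ 2 + 1 / v ^ 2) / 2 := by
  have := two_mul_le_add_sq u⁻¹ v⁻¹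
  simp only [one_div, mul_inv, ← inv_pow]
  linarith

lemma one_div_mul_lt_avg {u v : ℝ} (huv : u ≠ v) :
    1 / (u * v) < (1 / u ^ 2 + 1 / v ^ 2) / 2 := by
  simp only [one_div, mul_inv, ← inv_pow]
  nlinarith [sq_pos_of_ne_zero (sub_ne_zero.mpr (inv_injective.ne huv))]

lemma summable_one_div_natCast_add_mul {a b : ℝ} (ha : 0 < a) (hb : 0 < b) :
    Summable fun k : ℕ => 1 / (((k : ℝ) + a) * (k + b)) :=
  .of_nonneg_of_le (fun k => by positivity) (fun k => one_div_mul_le_avg _ _)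
    (((summable_one_div_natCast_add_sq ha).add (summable_one_div_natCast_add_sq hb)).div_const 2)

theorem digamma_sub_digamma {a b : ℝ} (ha : 0 < a) (hb : 0 < b) :
    digamma a - digamma b = (a - b) * ∑' k : ℕ, 1 / ((k + a) * (k + b)) := by
  have hterm (k : ℕ) : digammaTerm a k - digammaTerm b k =
      (a - b) * (1 / (((k + 1 : ℕ) + a) * ((k + 1 : ℕ) + b))) := by
    rw [digammaTerm, digammaTerm, div_sub_div _ _ (by positivity) (by positivity)]
    push_cast
    field_simp
    ring
  -- the `k = 0` term of the product series accounts for `1/b - 1/a`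
  rw [digamma_eq_tsum ha, digamma_eq_tsum hb,
    (summable_one_div_natCast_add_mul ha hb).tsum_eq_zero_add, mul_add, ← tsum_mul_left,
    ← tsum_congr hterm,
    (summable_digammaTerm ha.le).tsum_sub (summable_digammaTerm hb.le)]
  push_cast
  field_simp
  ring

theorem tsum_one_div_mul_lt_avg_trigamma {a b : ℝ} (ha : 0 < a) (hb : 0 < b) (hab : a ≠ b) :
    ∑' k : ℕ, 1 / ((k + a) * (k + b)) < (trigamma a + trigamma b) / 2 := by
  rw [trigamma_eq_tsum ha, trigamma_eq_tsum hb,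
    ← (summable_one_div_natCast_add_sq ha).tsum_add (summable_one_div_natCast_add_sq hb),
    ← tsum_div_const]
  exact Summable.tsum_lt_tsum_of_nonneg (i := 0) (fun k => by positivity)
    (fun k => one_div_mul_le_avg _ _) (one_div_mul_lt_avg (by simpa using hab))
    (((summable_one_div_natCast_add_sq ha).add (summable_one_div_natCast_add_sq hb)).div_const 2)

/-- For `a ≠ b`, `0 < (ψ(a) - ψ(b))/(a - b) < (ψ'(a) + ψ'(b))/2`; equivalently the correlation
lower bound `1 - 4(ψ(a) - ψ(b))/[(a - b)(ψ'(a) + ψ'(b))]` of the bivariate logistic-beta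
distribution lies in `(-1, 1)` (underlying Corollary 2.1 of the paper). -/
theorem digamma_trigamma_correlation_bound (a b : ℝ) (ha : 0 < a) (hb : 0 < b) (hab : a ≠ b) :
    (0 < (digamma a - digamma b) / (a - b) ∧
        (digamma a - digamma b) / (a - b) < (trigamma a + trigamma b) / 2) ∧
      (0 < 2 * (digamma a - digamma b) / ((a - b) * (trigamma a + trigamma b)) ∧
          2 * (digamma a - digamma b) / ((a - b) * (trigamma a + trigamma b)) < 1) ∧
      1 - 4 * (digamma a - digamma b) / ((a - b) * (trigamma a + trigamma b)) ∈
        Set.Ioo (-1 : ℝ) 1 := by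
  set P := ∑' k : ℕ, 1 / ((k + a) * (k + b))
  set T := trigamma a + trigamma b
  have hab' : a - b ≠ 0 := sub_ne_zero.mpr hab
  have hP : 0 < P := (summable_one_div_natCast_add_mul ha hb).tsum_pos (fun k => by positivity) 0
    (by positivity)
  have hPT : P < T / 2 := tsum_one_div_mul_lt_avg_trigamma ha hb hab
  have hT : 0 < T := by linarith
  have hdiff : digamma a - digamma b = (a - b) * P := digamma_sub_digamma ha hb
  have hscaled (c : ℝ) : c * (digamma a - digamma b) / ((a - b) * T) = c * P / T := by
    rw [hdiff, mul_left_comm, mul_div_mul_left _ _ hab']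
  rw [hscaled, hscaled, hdiff, mul_div_cancel_left₀ _ hab']
  have hpos : 0 < 2 * P / T := by positivity
  have hlt : 2 * P / T < 1 := (div_lt_one hT).2 (by linarith)
  have hfour : 4 * P / T = 2 * (2 * P / T) := by ring
  exact ⟨⟨hP, hPT⟩, ⟨hpos, hlt⟩, by rw [hfour]; constructor <;> linarith⟩
end
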